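/- Let G be a graph of order n with minimum degree δ(G) = 1. Then IC(G) = n if and only if G is isomorphic to K_2, or G belongs to the family F, i.e., n ≥ 3 and G has a pendant vertex x with support vertex y (the unique neighbor of x) such that the set V(G) ∖ {x, y} induces a clique in G. -/

import Mathlib

/-!
An ic-partition has at most `n` classes, and only the partition into singletons has exactly `n`;
so `IC G = n` says that every non-dominating vertex `v` has a partner `w` for which `{v, w}` is
an independent dominating set. Let `x` be a leaf with support `y`. A partner of a vertex outside
`{x, y}` has to dominate `x`, so it is `x` or `y`; then two nonadjacent vertices `u`, `v` outside
`{x, y}` would both need the partner `y`, which would have to be adjacent to `v` (to dominate it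
together with `u`) and not adjacent to it (to be independent together with `v`). Conversely, if
`V ∖ {x, y}` is a clique, `x` pairs with any third vertex, `y` with any vertex it misses, and every
other vertex with `x`.
-/

namespace ICNL

variable {V : Type*}

/-- `S` is a dominating set of `G`. -/
def Dominating (G : SimpleGraph V) (S : Set V) : Prop :=
  ∀ v : V, v ∈ S ∨ ∃ u ∈ S, G.Adj u v

/-- `S` is an independent set of `G`. -/
def IndepSet (G : SimpleGraph V) (S : Set V) : Prop :=
  ∀ ⦃u : V⦄, u ∈ S → ∀ ⦃v : V⦄, v ∈ S → ¬ G.Adj u v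

/-- `S` is an independent dominating set of `G`. -/
def IndepDom (G : SimpleGraph V) (S : Set V) : Prop :=
  IndepSet G S ∧ Dominating G S

/-- `A` and `B` form an independent coalition in `G`. -/
def ICCoalition (G : SimpleGraph V) (A B : Set V) : Prop :=
  Disjoint A B ∧ IndepSet G A ∧ IndepSet G B ∧
    ¬ IndepDom G A ∧ ¬ IndepDom G B ∧ IndepDom G (A ∪ B)

/-- `π` is a partition of the vertex set into nonempty classes. -/
def IsPartition (π : Finset (Finset V)) : Prop :=
  (∀ A ∈ π, A.Nonempty) ∧ ∀ v : V, ∃! A : Finset V, A ∈ π ∧ v ∈ A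

/-- `π` is an independent coalition partition of `G`. -/
def IsICPartition (G : SimpleGraph V) (π : Finset (Finset V)) : Prop :=
  IsPartition π ∧
    ∀ A ∈ π, (∃ v : V, (A : Set V) = {v} ∧ Dominating G (A : Set V)) ∨
      (¬ IndepDom G (A : Set V) ∧
        ∃ B ∈ π, B ≠ A ∧ ICCoalition G (A : Set V) (B : Set V))

/-- The independent coalition number: the maximum number of classes of an
ic-partition of `G`. -/
noncomputable def IC (G : SimpleGraph V) : ℕ :=
  sSup {k | ∃ π : Finset (Finset V), IsICPartition G π ∧ π.card = k}

theorem IsPartition.card_eq_one_of_card_eq [Fintype V] {π : Finset (Finset V)}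
    (hπ : IsPartition π) (hcard : π.card = Fintype.card V) {A : Finset V} (hA : A ∈ π) :
    A.card = 1 := by
  classical
  have hdisj : (π : Set (Finset V)).PairwiseDisjoint id := by
    intro B hB C hC hne
    refine Finset.disjoint_left.2 fun v hvB hvC => hne ?_
    obtain ⟨D, -, hD⟩ := hπ.2 v
    exact (hD B ⟨hB, hvB⟩).trans (hD C ⟨hC, hvC⟩).symm
  have hcover : π.biUnion id = Finset.univ :=
    Finset.eq_univ_of_forall fun v => Finset.mem_biUnion.2 (hπ.2 v).exists
  have hsum : ∑ _B ∈ π, 1 = ∑ B ∈ π, (id B).card := by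
    rw [← Finset.card_biUnion hdisj, hcover, Finset.card_univ, ← hcard, Finset.card_eq_sum_ones]
  exact ((Finset.sum_eq_sum_iff_of_le fun B hB => Finset.card_pos.2 (hπ.1 B hB)).1 hsum A hA).symm

theorem IsPartition.card_le [Fintype V] {π : Finset (Finset V)} (hπ : IsPartition π) :
    π.card ≤ Fintype.card V := by
  classical
  calc π.card ≤ (Finset.univ.image fun v => (hπ.2 v).exists.choose).card := by
        refine Finset.card_le_card fun A hA => ?_
        obtain ⟨v, hv⟩ := hπ.1 A hA
        exact Finset.mem_image.2 ⟨v, Finset.mem_univ v,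
          (hπ.2 v).unique (hπ.2 v).exists.choose_spec ⟨hA, hv⟩⟩
    _ ≤ Fintype.card V := Finset.card_image_le

variable (V) in
def singletonPartition [Fintype V] : Finset (Finset V) :=
  Finset.univ.map ⟨singleton, Finset.singleton_injective⟩

theorem mem_singletonPartition [Fintype V] {A : Finset V} :
    A ∈ singletonPartition V ↔ ∃ v, A = {v} := by
  simp [singletonPartition, eq_comm]

theorem card_singletonPartition [Fintype V] : (singletonPartition V).card = Fintype.card V := by
  simp [singletonPartition]

theorem isPartition_singletonPartition [Fintype V] : IsPartition (singletonPartition V) := by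
  refine ⟨fun A hA => ?_, fun v => ⟨{v}, ⟨mem_singletonPartition.2 ⟨v, rfl⟩, Finset.mem_singleton_self v⟩, ?_⟩⟩
  · obtain ⟨v, rfl⟩ := mem_singletonPartition.1 hA
    exact Finset.singleton_nonempty v
  · rintro A ⟨hA, hvA⟩
    obtain ⟨w, rfl⟩ := mem_singletonPartition.1 hA
    rw [Finset.mem_singleton.1 hvA]

theorem IsPartition.eq_singletonPartition [Fintype V] {π : Finset (Finset V)}
    (hπ : IsPartition π) (hcard : π.card = Fintype.card V) : π = singletonPartition V := by
  ext A
  rw [mem_singletonPartition]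
  constructor
  · exact fun hA => Finset.card_eq_one.1 (hπ.card_eq_one_of_card_eq hcard hA)
  · rintro ⟨v, rfl⟩
    obtain ⟨B, ⟨hB, hvB⟩, -⟩ := hπ.2 v
    obtain ⟨w, rfl⟩ := Finset.card_eq_one.1 (hπ.card_eq_one_of_card_eq hcard hB)
    rwa [Finset.mem_singleton.1 hvB]

theorem IC_eq_card_iff [Fintype V] (G : SimpleGraph V) :
    IC G = Fintype.card V ↔ IsICPartition G (singletonPartition V) := by
  set S := {k | ∃ π : Finset (Finset V), IsICPartition G π ∧ π.card = k}
  have hbdd : Fintype.card V ∈ upperBounds S := by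
    rintro _ ⟨π, hπ, rfl⟩
    exact hπ.1.card_le
  refine ⟨fun h => ?_, fun h => IsGreatest.csSup_eq ⟨⟨_, h, card_singletonPartition⟩, hbdd⟩⟩
  rcases S.eq_empty_or_nonempty with hS | hS
  · -- `sSup ∅ = 0`, so here `V` is empty
    have hsup : sSup S = Fintype.card V := h
    have : IsEmpty V := by
      rw [← Fintype.card_eq_zero_iff, ← hsup, hS, csSup_empty, bot_eq_zero]
    refine ⟨isPartition_singletonPartition, fun A hA => ?_⟩
    obtain ⟨v, -⟩ := mem_singletonPartition.1 hA
    exact isEmptyElim v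
  · obtain ⟨π, hπ, hcard⟩ : Fintype.card V ∈ S := h ▸ Nat.sSup_mem hS ⟨_, hbdd⟩
    rwa [hπ.1.eq_singletonPartition hcard] at hπ

section Singletons

variable {G : SimpleGraph V}

theorem dominating_singleton_iff {v : V} : Dominating G {v} ↔ ∀ u, u ≠ v → G.Adj v u := by
  refine forall_congr' fun u => ?_
  simp only [Set.mem_singleton_iff, exists_eq_left]
  constructor
  · exact fun h hne => h.resolve_left hne
  · exact fun h => (em (u = v)).imp_right h

theorem indepSet_singleton (v : V) : IndepSet G {v} := by
  rintro a rfl b rfl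
  exact G.loopless.irrefl _

theorem indepSet_pair_iff {a b : V} : IndepSet G ({a} ∪ {b}) ↔ ¬G.Adj a b := by
  refine ⟨fun h => h (Or.inl rfl) (Or.inr rfl), fun h => ?_⟩
  rintro u (rfl | rfl) v (rfl | rfl) huv
  exacts [G.loopless.irrefl _ huv, h huv, h huv.symm, G.loopless.irrefl _ huv]

theorem iCCoalition_singleton_iff {a b : V} :
    ICCoalition G {a} {b} ↔
      ¬Dominating G {a} ∧ ¬Dominating G {b} ∧ ¬G.Adj a b ∧ Dominating G ({a} ∪ {b}) := by
  simp only [ICCoalition, IndepDom, indepSet_singleton, indepSet_pair_iff, true_and,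
    Set.disjoint_singleton]
  constructor
  · rintro ⟨-, hda, hdb, hab, hdom⟩
    exact ⟨hda, hdb, hab, hdom⟩
  · rintro ⟨hda, hdb, hab, hdom⟩
    refine ⟨?_, hda, hdb, hab, hdom⟩
    rintro rfl
    exact hda (by rwa [Set.union_self] at hdom)

theorem isICPartition_singletonPartition_iff [Fintype V] :
    IsICPartition G (singletonPartition V) ↔
      ∀ v, Dominating G {v} ∨ ∃ w, ICCoalition G {v} {w} := by
  simp only [IsICPartition, isPartition_singletonPartition, true_and, mem_singletonPartition,
    forall_exists_index, forall_eq_apply_imp_iff, Finset.coe_singleton]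
  refine forall_congr' fun v => or_congr ⟨fun ⟨_, _, h⟩ => h, fun h => ⟨v, rfl, h⟩⟩ ⟨?_, ?_⟩
  · rintro ⟨-, -, ⟨w, rfl⟩, -, h⟩
    exact ⟨w, by rwa [Finset.coe_singleton] at h⟩
  · rintro ⟨w, h⟩
    have hvw : v ≠ w := Set.disjoint_singleton.1 h.1
    exact ⟨h.2.2.2.1, {w}, ⟨w, rfl⟩, Finset.singleton_inj.not.2 hvw.symm,
      by rwa [Finset.coe_singleton]⟩

end Singletons

theorem ICCoalition.symm {G : SimpleGraph V} {A B : Set V} (h : ICCoalition G A B) :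
    ICCoalition G B A := by
  obtain ⟨hdisj, hA, hB, hnA, hnB, hAB⟩ := h
  exact ⟨hdisj.symm, hB, hA, hnB, hnA, Set.union_comm A B ▸ hAB⟩

theorem dominating_singleton_of_iso_top {W : Type*} {G : SimpleGraph V}
    (e : G ≃g (⊤ : SimpleGraph W)) (v : V) : Dominating G {v} :=
  dominating_singleton_iff.2 fun _ hu =>
    e.map_adj_iff.1 ((SimpleGraph.top_adj _ _).2 (e.injective.ne hu.symm))

theorem nonempty_iso_top_of_card_eq_two [Fintype V] {G : SimpleGraph V}
    (hcard : Fintype.card V = 2) {x y : V} (hxy : G.Adj x y) :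
    Nonempty (G ≃g (⊤ : SimpleGraph (Fin 2))) := by
  classical
  have hcover : ∀ v, v = x ∨ v = y := by
    have : ({x, y} : Finset V) = Finset.univ :=
      Finset.eq_univ_of_card _ (by rw [Finset.card_pair hxy.ne, hcard])
    simpa [Finset.ext_iff] using this
  have htop : G = ⊤ := by
    ext u v
    refine ⟨G.ne_of_adj, fun huv => ?_⟩
    rcases hcover u with rfl | rfl <;> rcases hcover v with rfl | rfl
    exacts [absurd rfl huv, hxy, hxy.symm, absurd rfl huv]
  subst htop
  exact ⟨SimpleGraph.Iso.completeGraph (Fintype.equivFinOfCardEq hcard)⟩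

theorem isClique_compl_pair_iff {G : SimpleGraph V} {x y : V} :
    G.IsClique ({x, y}ᶜ : Set V) ↔
      ∀ u v, u ≠ x → u ≠ y → v ≠ x → v ≠ y → u ≠ v → G.Adj u v := by
  simp only [SimpleGraph.IsClique, Set.Pairwise, Set.mem_compl_iff, Set.mem_insert_iff,
    Set.mem_singleton_iff, not_or, and_imp]
  exact ⟨fun h u v hux huy hvx hvy => h hux huy hvx hvy, fun h u hux huy v => h u v hux huy⟩

def IsLeafWithSupport (G : SimpleGraph V) (x y : V) : Prop :=
  G.Adj x y ∧ ∀ w, G.Adj x w → w = y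

theorem exists_isLeafWithSupport_of_minDegree_eq_one [Fintype V] {G : SimpleGraph V}
    [DecidableRel G.Adj] (h : G.minDegree = 1) : ∃ x y, IsLeafWithSupport G x y := by
  cases isEmpty_or_nonempty V
  · simp at h
  obtain ⟨x, hx⟩ := G.exists_minimal_degree_vertex
  obtain ⟨y, hy⟩ := Finset.card_eq_one.1 (h ▸ hx.symm : G.degree x = 1)
  have hnbr : ∀ w, G.Adj x w ↔ w = y := fun w => by
    rw [← G.mem_neighborFinset, hy, Finset.mem_singleton]
  exact ⟨x, y, (hnbr y).2 rfl, fun w => (hnbr w).1⟩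

namespace IsLeafWithSupport

variable {G : SimpleGraph V} {x y : V}

theorem not_adj (h : IsLeafWithSupport G x y) {w : V} (hw : w ≠ y) : ¬G.Adj x w :=
  fun hxw => hw (h.2 w hxw)

theorem two_le_card [Fintype V] (h : IsLeafWithSupport G x y) : 2 ≤ Fintype.card V := by
  classical
  simpa [Finset.card_pair h.1.ne] using Finset.card_le_univ {x, y}

theorem not_dominating_singleton (h : IsLeafWithSupport G x y) {w : V} (hwx : w ≠ x)
    (hwy : w ≠ y) : ¬Dominating G {w} :=
  fun hd => h.not_adj hwy (dominating_singleton_iff.1 hd x hwx.symm).symm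

theorem support_adj_of_iCCoalition (h : IsLeafWithSupport G x y) {w c v : V}
    (hco : ICCoalition G {w} {c}) (hwx : w ≠ x) (hwy : w ≠ y) (hvx : v ≠ x) (hvy : v ≠ y)
    (hvw : v ≠ w) (hwv : ¬G.Adj w v) : c = y ∧ G.Adj y v := by
  obtain ⟨-, -, -, hdom⟩ := iCCoalition_singleton_iff.1 hco
  have hc : c = x ∨ c = y := by
    rcases hdom x with (hxw | hxc) | ⟨u, (rfl | rfl), hux⟩
    · exact absurd hxw.symm hwx
    · exact Or.inl hxc.symm
    · exact absurd (h.2 _ hux.symm) hwy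
    · exact Or.inr (h.2 _ hux.symm)
  rcases hdom v with (hvw' | rfl) | ⟨u, (rfl | rfl), huv⟩
  · exact absurd hvw' hvw
  · exact hc.elim (absurd · hvx) (absurd · hvy)
  · exact absurd huv hwv
  · rcases hc with rfl | rfl
    · exact absurd (h.2 v huv) hvy
    · exact ⟨rfl, huv⟩

theorem isClique_compl_of_forall (h : IsLeafWithSupport G x y)
    (hco : ∀ v, Dominating G {v} ∨ ∃ w, ICCoalition G {v} {w}) :
    G.IsClique ({x, y}ᶜ : Set V) := by
  intro u hu v hv huv
  by_contra hadj
  simp only [Set.mem_compl_iff, Set.mem_insert_iff, Set.mem_singleton_iff, not_or] at hu hv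
  obtain ⟨c, hc⟩ := (hco u).resolve_left (h.not_dominating_singleton hu.1 hu.2)
  obtain ⟨d, hd⟩ := (hco v).resolve_left (h.not_dominating_singleton hv.1 hv.2)
  obtain ⟨-, hyv⟩ := h.support_adj_of_iCCoalition hc hu.1 hu.2 hv.1 hv.2 (Ne.symm huv) hadj
  obtain ⟨rfl, -⟩ := h.support_adj_of_iCCoalition hd hv.1 hv.2 hu.1 hu.2 huv
    (fun hvu => hadj hvu.symm)
  exact (iCCoalition_singleton_iff.1 hd).2.2.1 hyv.symm

theorem dominating_pair (h : IsLeafWithSupport G x y) (hcl : G.IsClique ({x, y}ᶜ : Set V))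
    {a b : V} (ha : a = x ∨ a = y) (hbx : b ≠ x) (hby : b ≠ y) : Dominating G ({a} ∪ {b}) := by
  intro t
  by_cases hta : t = a
  · exact Or.inl (Or.inl hta)
  by_cases htb : t = b
  · exact Or.inl (Or.inr htb)
  refine Or.inr ?_
  by_cases ht : t = x ∨ t = y
  · refine ⟨a, Or.inl rfl, ?_⟩
    rcases ha with rfl | rfl <;> rcases ht with rfl | rfl
    exacts [absurd rfl hta, h.1, h.1.symm, absurd rfl hta]
  · rw [not_or] at ht
    exact ⟨b, Or.inr rfl, hcl (by simp [hbx, hby]) (by simp [ht.1, ht.2]) (Ne.symm htb)⟩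

theorem forall_dominating_or_iCCoalition [Fintype V] (h : IsLeafWithSupport G x y)
    (hcard : 3 ≤ Fintype.card V) (hcl : G.IsClique ({x, y}ᶜ : Set V)) :
    ∀ v, Dominating G {v} ∨ ∃ w, ICCoalition G {v} {w} := by
  classical
  have hcoal : ∀ {a b : V}, (a = x ∨ a = y) → b ≠ x → b ≠ y → ¬Dominating G {a} →
      ¬G.Adj a b → ICCoalition G {a} {b} := fun ha hbx hby hda hab =>
    iCCoalition_singleton_iff.2
      ⟨hda, h.not_dominating_singleton hbx hby, hab, h.dominating_pair hcl ha hbx hby⟩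
  intro v
  refine or_iff_not_imp_left.2 fun hv => ?_
  by_cases hvx : v = x
  · obtain ⟨z, -, hz⟩ := Finset.exists_mem_notMem_of_card_lt_card (s := {x, y})
      (t := Finset.univ) (by rw [Finset.card_univ]; exact Finset.card_le_two.trans_lt hcard)
    simp only [Finset.mem_insert, Finset.mem_singleton, not_or] at hz
    subst hvx
    exact ⟨z, hcoal (Or.inl rfl) hz.1 hz.2 hv (h.not_adj hz.2)⟩
  by_cases hvy : v = y
  · subst hvy
    obtain ⟨w, hwv, hvw⟩ : ∃ w, w ≠ v ∧ ¬G.Adj v w := by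
      simpa [dominating_singleton_iff] using hv
    have hwx : w ≠ x := by
      rintro rfl
      exact hvw h.1.symm
    exact ⟨w, hcoal (Or.inr rfl) hwx hwv hv hvw⟩
  · have hnx : ¬Dominating G {x} := fun hd => h.not_adj hvy (dominating_singleton_iff.1 hd v hvx)
    exact ⟨x, (hcoal (Or.inl rfl) hvx hvy hnx (h.not_adj hvy)).symm⟩

end IsLeafWithSupport

theorem stmt_18 {V : Type*} [Fintype V] (G : SimpleGraph V) [DecidableRel G.Adj]
    (n : ℕ) (hn : Fintype.card V = n) (hδ : G.minDegree = 1) :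
    IC G = n ↔ (Nonempty (G ≃g (⊤ : SimpleGraph (Fin 2))) ∨
      (3 ≤ n ∧ ∃ x y : V, G.Adj x y ∧ (∀ w : V, G.Adj x w → w = y) ∧
        ∀ u v : V, u ≠ x → u ≠ y → v ≠ x → v ≠ y → u ≠ v → G.Adj u v)) := by
  subst hn
  simp only [← isClique_compl_pair_iff]
  rw [IC_eq_card_iff, isICPartition_singletonPartition_iff]
  constructor
  · intro hco
    obtain ⟨x, y, hxy⟩ := exists_isLeafWithSupport_of_minDegree_eq_one hδ
    rcases hxy.two_le_card.eq_or_lt with h2 | h3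
    · exact Or.inl (nonempty_iso_top_of_card_eq_two h2.symm hxy.1)
    · exact Or.inr ⟨h3, x, y, hxy.1, hxy.2, hxy.isClique_compl_of_forall hco⟩
  · rintro (he | ⟨h3, x, y, hadj, hleaf, hcl⟩)
    · obtain ⟨e⟩ := he
      exact fun v => Or.inl (dominating_singleton_of_iso_top e v)
    · exact IsLeafWithSupport.forall_dominating_or_iCCoalition ⟨hadj, hleaf⟩ h3 hcl

end ICNL
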